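/- Let T > 0 and d > 0. There exists a constant C > 0 such that for every integer N ≥ 1 and every t > 0 one has | (2π/(NT)) · ∑_{j ∈ J_N} ξ_j² exp(−2d ξ_j² t) − ∫_{−π/T}^{π/T} ξ² exp(−2d ξ² t) dξ | ≤ C / (N(1+t)), where ξ_j = 2πj/(NT). -/

import Mathlib

open Real Finset

noncomputable def JN (N : ℕ) : Finset ℤ := Finset.Ico ⌈-(N : ℝ) / 2⌉ ⌈(N : ℝ) / 2⌉

/-!
Write `w(ξ) = ξ² e^{-cξ²}` with `c = 2dt`, and `Δ = 2π/(NT)`. The frequencies `ξ_j`, `j ∈ J_N`, are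
the grid `a + kΔ`, `k < N`, with `a ∈ [-π/T, -π/T + Δ]`. On each cell the left Riemann sum misses
the integral by at most `Δ ∫_cell |w'|`, and moving the window `[a, a + 2π/T]` to `[-π/T, π/T]`
costs at most `2Δ sup |w|`. On `[-A, A]` both `∫ |w'|` and `sup w` are bounded uniformly in `c`
and are `O(1/c)` (for `∫ |w'|` through an explicit antiderivative of a majorant of `c |w'|`),
hence `O(1/(1 + t))`.
-/

open MeasureTheory intervalIntegral
open scoped Interval

section RiemannSum

variable {E : Type*} [NormedAddCommGroup E] [NormedSpace ℝ E] {f f' : ℝ → E}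

theorem integral_eq_sum_integral_grid {F : Type*} [NormedAddCommGroup F] [NormedSpace ℝ F]
    {g : ℝ → F} (hg : Continuous g) (a Δ : ℝ) (N : ℕ) :
    ∫ x in a..a + N * Δ, g x = ∑ k ∈ range N, ∫ x in a + k * Δ..a + (k + 1 : ℕ) * Δ, g x := by
  rw [sum_integral_adjacent_intervals fun k _ => hg.intervalIntegrable _ _]
  simp

theorem norm_integral_sub_smul_le [CompleteSpace E] (hf : ∀ x, HasDerivAt f (f' x) x)
    (hf' : Continuous f') (c : ℝ) {δ : ℝ} (hδ : 0 ≤ δ) :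
    ‖(∫ x in c..c + δ, f x) - δ • f c‖ ≤ δ * ∫ x in c..c + δ, ‖f' x‖ := by
  have hfc : Continuous f := continuous_iff_continuousAt.2 fun x => (hf x).continuousAt
  have hle : c ≤ c + δ := by linarith
  have hosc : ∀ x ∈ Ι c (c + δ), ‖f x - f c‖ ≤ ∫ y in c..c + δ, ‖f' y‖ := by
    intro x hx
    rw [Set.uIoc_of_le hle] at hx
    rw [← integral_eq_sub_of_hasDerivAt (fun y _ => hf y) (hf'.intervalIntegrable _ _)]
    calc ‖∫ y in c..x, f' y‖ ≤ ∫ y in c..x, ‖f' y‖ := norm_integral_le_integral_norm hx.1.le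
      _ ≤ ∫ y in c..c + δ, ‖f' y‖ :=
        integral_mono_interval le_rfl hx.1.le hx.2 (ae_of_all _ fun _ => norm_nonneg _)
          (hf'.norm.intervalIntegrable _ _)
  calc ‖(∫ x in c..c + δ, f x) - δ • f c‖ = ‖∫ x in c..c + δ, (f x - f c)‖ := by
        rw [integral_sub (hfc.intervalIntegrable _ _) intervalIntegrable_const,
          intervalIntegral.integral_const, add_sub_cancel_left]
    _ ≤ (∫ y in c..c + δ, ‖f' y‖) * |c + δ - c| := norm_integral_le_of_norm_le_const hosc
    _ = δ * ∫ x in c..c + δ, ‖f' x‖ := by rw [add_sub_cancel_left, abs_of_nonneg hδ, mul_comm]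

theorem norm_riemannSum_sub_integral_le [CompleteSpace E] (hf : ∀ x, HasDerivAt f (f' x) x)
    (hf' : Continuous f') (a : ℝ) {Δ : ℝ} (hΔ : 0 ≤ Δ) (N : ℕ) :
    ‖Δ • ∑ k ∈ range N, f (a + k * Δ) - ∫ x in a..a + N * Δ, f x‖ ≤
      Δ * ∫ x in a..a + N * Δ, ‖f' x‖ := by
  have hfc : Continuous f := continuous_iff_continuousAt.2 fun x => (hf x).continuousAt
  have hnode : ∀ k : ℕ, a + (k + 1 : ℕ) * Δ = a + k * Δ + Δ := fun k => by push_cast; ring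
  rw [integral_eq_sum_integral_grid hfc, smul_sum, ← sum_sub_distrib,
    integral_eq_sum_integral_grid hf'.norm, mul_sum]
  refine (norm_sum_le _ _).trans (sum_le_sum fun k _ => ?_)
  rw [norm_sub_rev, hnode]
  exact norm_integral_sub_smul_le hf hf' _ hΔ

theorem norm_integral_sub_integral_le (hf : Continuous f) {a b a' b' M : ℝ}
    (ha : ∀ x ∈ Set.uIcc a a', ‖f x‖ ≤ M) (hb : ∀ x ∈ Set.uIcc b b', ‖f x‖ ≤ M) :
    ‖(∫ x in a..b, f x) - ∫ x in a'..b', f x‖ ≤ M * (|a' - a| + |b' - b|) := by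
  rw [integral_interval_sub_interval_comm (hf.intervalIntegrable _ _)
    (hf.intervalIntegrable _ _) (hf.intervalIntegrable _ _), mul_add]
  refine (norm_sub_le _ _).trans (add_le_add ?_ ?_)
  · exact norm_integral_le_of_norm_le_const fun x hx => ha x (Set.uIoc_subset_uIcc hx)
  · exact norm_integral_le_of_norm_le_const fun x hx => hb x (Set.uIoc_subset_uIcc hx)

theorem norm_riemannSum_sub_integral_symm_le [CompleteSpace E] (hf : ∀ x, HasDerivAt f (f' x) x)
    (hf' : Continuous f') {p Δ A M a : ℝ} {N : ℕ} (hΔ : 0 ≤ Δ) (hNΔ : N * Δ = 2 * p)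
    (ha : a ∈ Set.Icc (-p) (-p + Δ)) (hA : p + Δ ≤ A) (hM : ∀ x ∈ Set.Icc (-A) A, ‖f x‖ ≤ M) :
    ‖Δ • ∑ k ∈ range N, f (a + k * Δ) - ∫ x in -p..p, f x‖ ≤
      Δ * ((∫ x in -A..A, ‖f' x‖) + 2 * M) := by
  have hfc : Continuous f := continuous_iff_continuousAt.2 fun x => (hf x).continuousAt
  have hp : 0 ≤ p := by nlinarith [mul_nonneg (Nat.cast_nonneg N) hΔ]
  have hM₀ : 0 ≤ M := (norm_nonneg _).trans (hM 0 ⟨by linarith, by linarith⟩)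
  have hb : a + N * Δ ∈ Set.Icc p (p + Δ) := ⟨by linarith [ha.1], by linarith [ha.2]⟩
  have hM' : ∀ x ∈ Set.Icc (-p) (p + Δ), ‖f x‖ ≤ M := fun x hx =>
    hM x ⟨by linarith [hx.1], by linarith [hx.2]⟩
  have hMa : ∀ x ∈ Set.uIcc a (-p), ‖f x‖ ≤ M := fun x hx =>
    hM' x (Set.uIcc_subset_Icc ⟨ha.1, by linarith [ha.2]⟩ ⟨le_rfl, by linarith⟩ hx)
  have hMb : ∀ x ∈ Set.uIcc (a + N * Δ) p, ‖f x‖ ≤ M := fun x hx =>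
    hM' x (Set.uIcc_subset_Icc ⟨by linarith [hb.1], hb.2⟩ ⟨by linarith, by linarith⟩ hx)
  have hend : |-p - a| + |p - (a + N * Δ)| ≤ 2 * Δ := by
    rw [abs_sub_comm, abs_of_nonneg (by linarith [ha.1]), abs_of_nonpos (by linarith [hb.1])]
    linarith [ha.2, hb.2]
  calc ‖Δ • ∑ k ∈ range N, f (a + k * Δ) - ∫ x in -p..p, f x‖
      ≤ ‖Δ • ∑ k ∈ range N, f (a + k * Δ) - ∫ x in a..a + N * Δ, f x‖
        + ‖(∫ x in a..a + N * Δ, f x) - ∫ x in -p..p, f x‖ :=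
          norm_sub_le_norm_sub_add_norm_sub _ _ _
    _ ≤ Δ * (∫ x in a..a + N * Δ, ‖f' x‖) + M * (|-p - a| + |p - (a + N * Δ)|) :=
        add_le_add (norm_riemannSum_sub_integral_le hf hf' a hΔ N)
          (norm_integral_sub_integral_le hfc hMa hMb)
    _ ≤ Δ * (∫ x in -A..A, ‖f' x‖) + M * (2 * Δ) := by
        gcongr
        exact integral_mono_interval (by linarith [ha.1]) (by linarith [hb.1, ha.2])
          (hb.2.trans hA) (ae_of_all _ fun _ => norm_nonneg _) (hf'.norm.intervalIntegrable _ _)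
    _ = Δ * ((∫ x in -A..A, ‖f' x‖) + 2 * M) := by ring

end RiemannSum

theorem integral_eq_two_mul_of_even {g : ℝ → ℝ} (hg : Continuous g)
    (heven : ∀ x, g (-x) = g x) (A : ℝ) : ∫ x in -A..A, g x = 2 * ∫ x in 0..A, g x := by
  have hleft : ∫ x in -A..0, g x = ∫ x in 0..A, g x := by
    simpa [heven] using (integral_comp_neg (a := 0) (b := A) g).symm
  rw [← integral_add_adjacent_intervals (b := 0) (hg.intervalIntegrable _ _)
    (hg.intervalIntegrable _ _), hleft, two_mul]

theorem le_div_one_add_of_mul_le {x a b t : ℝ} (ht : 0 ≤ t) (hxa : x ≤ a) (hxb : x * t ≤ b) :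
    x ≤ (a + b) / (1 + t) := by
  rw [le_div_iff₀ (by linarith)]
  linarith

noncomputable def gaussWeight (c ξ : ℝ) : ℝ := ξ ^ 2 * exp (-(c * ξ ^ 2))

noncomputable def gaussWeightDeriv (c ξ : ℝ) : ℝ := 2 * ξ * (1 - c * ξ ^ 2) * exp (-(c * ξ ^ 2))

theorem sq_mul_exp_eq_gaussWeight (d t ξ : ℝ) :
    ξ ^ 2 * exp (-2 * d * ξ ^ 2 * t) = gaussWeight (2 * d * t) ξ := by
  rw [gaussWeight]
  ring_nf

theorem hasDerivAt_gaussWeight (c ξ : ℝ) :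
    HasDerivAt (gaussWeight c) (gaussWeightDeriv c ξ) ξ := by
  have hsq : HasDerivAt (fun x : ℝ => x ^ 2) (2 * ξ) ξ := by simpa using hasDerivAt_pow 2 ξ
  have hexp : HasDerivAt (fun x : ℝ => -(c * x ^ 2)) (-(c * (2 * ξ))) ξ := (hsq.const_mul c).neg
  refine (hsq.mul hexp.exp).congr_deriv ?_
  rw [gaussWeightDeriv]
  ring

theorem continuous_gaussWeightDeriv (c : ℝ) : Continuous (gaussWeightDeriv c) := by
  unfold gaussWeightDeriv
  fun_prop

theorem gaussWeightDeriv_neg (c ξ : ℝ) : gaussWeightDeriv c (-ξ) = -gaussWeightDeriv c ξ := by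
  simp only [gaussWeightDeriv, neg_sq]
  ring

theorem gaussWeight_nonneg (c ξ : ℝ) : 0 ≤ gaussWeight c ξ := by
  unfold gaussWeight
  positivity

theorem gaussWeight_le_sq {c A ξ : ℝ} (hc : 0 ≤ c) (hξ : |ξ| ≤ A) : gaussWeight c ξ ≤ A ^ 2 := by
  have hexp : exp (-(c * ξ ^ 2)) ≤ 1 := exp_le_one_iff.2 (by nlinarith [sq_nonneg ξ])
  calc gaussWeight c ξ ≤ ξ ^ 2 := mul_le_of_le_one_right (sq_nonneg ξ) hexp
    _ ≤ A ^ 2 := sq_le_sq' (abs_le.1 hξ).1 (abs_le.1 hξ).2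

theorem mul_gaussWeight_le_one (c ξ : ℝ) : c * gaussWeight c ξ ≤ 1 :=
  calc c * gaussWeight c ξ = c * ξ ^ 2 * exp (-(c * ξ ^ 2)) := by rw [gaussWeight]; ring
    _ ≤ exp (-1) := mul_exp_neg_le_exp_neg_one _
    _ ≤ 1 := exp_le_one_iff.2 (by norm_num)

theorem abs_gaussWeightDeriv_le_majorant {c : ℝ} (hc : 0 ≤ c) (ξ : ℝ) :
    |gaussWeightDeriv c ξ| ≤ 2 * |ξ| * (1 + c * ξ ^ 2) * exp (-(c * ξ ^ 2)) := by
  have h : |1 - c * ξ ^ 2| ≤ 1 + c * ξ ^ 2 :=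
    abs_le.2 ⟨by nlinarith [sq_nonneg ξ], by nlinarith [sq_nonneg ξ]⟩
  rw [gaussWeightDeriv, abs_mul, abs_mul, abs_mul, abs_two, abs_of_pos (exp_pos _)]
  gcongr

theorem abs_gaussWeightDeriv_le {c : ℝ} (hc : 0 ≤ c) (ξ : ℝ) :
    |gaussWeightDeriv c ξ| ≤ 2 * |ξ| := by
  have h : (1 + c * ξ ^ 2) * exp (-(c * ξ ^ 2)) ≤ 1 := by
    rw [exp_neg, ← div_eq_mul_inv, div_le_one (exp_pos _)]
    linarith [add_one_le_exp (c * ξ ^ 2)]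
  calc |gaussWeightDeriv c ξ| ≤ 2 * |ξ| * ((1 + c * ξ ^ 2) * exp (-(c * ξ ^ 2))) := by
        rw [← mul_assoc]; exact abs_gaussWeightDeriv_le_majorant hc ξ
    _ ≤ 2 * |ξ| := mul_le_of_le_one_right (by positivity) h

theorem integral_abs_gaussWeightDeriv_le {c A : ℝ} (hc : 0 ≤ c) (hA : 0 ≤ A) :
    ∫ ξ in -A..A, |gaussWeightDeriv c ξ| ≤ 4 * A ^ 2 :=
  calc ∫ ξ in -A..A, |gaussWeightDeriv c ξ| ≤ ∫ _ in -A..A, 2 * A :=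
        integral_mono_on (by linarith) ((continuous_gaussWeightDeriv c).abs.intervalIntegrable _ _)
          intervalIntegrable_const fun ξ hξ =>
            (abs_gaussWeightDeriv_le hc ξ).trans (by linarith [abs_le.2 hξ])
    _ = 4 * A ^ 2 := by rw [intervalIntegral.integral_const, smul_eq_mul]; ring

theorem integral_gaussWeightDeriv_majorant (c A : ℝ) :
    ∫ ξ in 0..A, 2 * c * ξ * (1 + c * ξ ^ 2) * exp (-(c * ξ ^ 2)) =
      2 - (2 + c * A ^ 2) * exp (-(c * A ^ 2)) := by
  have hderiv : ∀ ξ : ℝ, HasDerivAt (fun x => -((2 + c * x ^ 2) * exp (-(c * x ^ 2))))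
      (2 * c * ξ * (1 + c * ξ ^ 2) * exp (-(c * ξ ^ 2))) ξ := by
    intro ξ
    have hsq : HasDerivAt (fun x : ℝ => x ^ 2) (2 * ξ) ξ := by simpa using hasDerivAt_pow 2 ξ
    have hexp : HasDerivAt (fun x : ℝ => -(c * x ^ 2)) (-(c * (2 * ξ))) ξ :=
      (hsq.const_mul c).neg
    refine (((hsq.const_mul c).const_add 2).mul hexp.exp).neg.congr_deriv ?_
    ring
  rw [integral_eq_sub_of_hasDerivAt (fun ξ _ => hderiv ξ)
    ((by fun_prop : Continuous _).intervalIntegrable _ _)]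
  simp
  ring

theorem mul_integral_abs_gaussWeightDeriv_le {c A : ℝ} (hc : 0 ≤ c) (hA : 0 ≤ A) :
    c * ∫ ξ in -A..A, |gaussWeightDeriv c ξ| ≤ 4 := by
  have hcont := (continuous_gaussWeightDeriv c).abs
  rw [integral_eq_two_mul_of_even hcont (fun ξ => by rw [gaussWeightDeriv_neg, abs_neg])]
  calc c * (2 * ∫ ξ in 0..A, |gaussWeightDeriv c ξ|)
      = 2 * ∫ ξ in 0..A, c * |gaussWeightDeriv c ξ| := by
        rw [intervalIntegral.integral_const_mul]; ring
    _ ≤ 2 * ∫ ξ in 0..A, 2 * c * ξ * (1 + c * ξ ^ 2) * exp (-(c * ξ ^ 2)) := by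
        gcongr
        refine integral_mono_on hA ((hcont.const_mul c).intervalIntegrable _ _)
          ((by fun_prop : Continuous _).intervalIntegrable _ _) fun ξ hξ => ?_
        have := mul_le_mul_of_nonneg_left (abs_gaussWeightDeriv_le_majorant hc ξ) hc
        rw [abs_of_nonneg hξ.1] at this
        linarith
    _ = 2 * (2 - (2 + c * A ^ 2) * exp (-(c * A ^ 2))) := by
        rw [integral_gaussWeightDeriv_majorant]
    _ ≤ 4 := by nlinarith [show 0 ≤ (2 + c * A ^ 2) * exp (-(c * A ^ 2)) by positivity]

theorem gaussWeight_le_div {d t A ξ : ℝ} (hd : 0 < d) (ht : 0 ≤ t) (hξ : |ξ| ≤ A) :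
    gaussWeight (2 * d * t) ξ ≤ (A ^ 2 + 1 / (2 * d)) / (1 + t) := by
  refine le_div_one_add_of_mul_le ht (gaussWeight_le_sq (by positivity) hξ) ?_
  rw [le_div_iff₀ (by positivity)]
  linarith [mul_gaussWeight_le_one (2 * d * t) ξ]

theorem integral_abs_gaussWeightDeriv_le_div {d t A : ℝ} (hd : 0 < d) (ht : 0 ≤ t)
    (hA : 0 ≤ A) :
    ∫ ξ in -A..A, |gaussWeightDeriv (2 * d * t) ξ| ≤ (4 * A ^ 2 + 2 / d) / (1 + t) := by
  refine le_div_one_add_of_mul_le ht (integral_abs_gaussWeightDeriv_le (by positivity) hA) ?_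
  rw [le_div_iff₀ hd]
  linarith [mul_integral_abs_gaussWeightDeriv_le (c := 2 * d * t) (by positivity) hA]

theorem JN_eq_Ico (N : ℕ) : JN N = Ico ⌈-(N : ℝ) / 2⌉ (⌈-(N : ℝ) / 2⌉ + N) := by
  rw [JN, ← Int.ceil_add_intCast]
  congr 2
  push_cast
  ring

theorem sum_JN_mul_eq_sum_range {M : Type*} [AddCommMonoid M] (N : ℕ) (Δ : ℝ) (g : ℝ → M) :
    ∑ j ∈ JN N, g (j * Δ) = ∑ k ∈ range N, g (⌈-(N : ℝ) / 2⌉ * Δ + k * Δ) := by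
  rw [JN_eq_Ico, Int.Ico_eq_finset_map, sum_map]
  simp [add_mul]

theorem ceil_neg_half_mul_mem (N : ℕ) {Δ : ℝ} (hΔ : 0 ≤ Δ) :
    (⌈-(N : ℝ) / 2⌉ : ℝ) * Δ ∈ Set.Icc (-(N * Δ / 2)) (-(N * Δ / 2) + Δ) :=
  ⟨by nlinarith [Int.le_ceil (-(N : ℝ) / 2)],
    by nlinarith [Int.ceil_lt_add_one (-(N : ℝ) / 2)]⟩

/-- Second estimate of Proposition 5.1: the weighted Riemann sum
`(2π/(NT)) ∑_{j ∈ J_N} ξ_j² e^{-2d ξ_j² t}` approximates the integral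
`∫_{-π/T}^{π/T} ξ² e^{-2dξ²t} dξ` with error at most `C/(N(1+t))`. -/
theorem sharp_sum_integral_comparison_weighted (T d : ℝ) (hT : 0 < T) (hd : 0 < d) :
    ∃ C : ℝ, 0 < C ∧ ∀ N : ℕ, 1 ≤ N → ∀ t : ℝ, 0 < t →
      |2 * π / (N * T) *
            ∑ j ∈ JN N,
              (2 * π * (j : ℝ) / (N * T)) ^ 2 *
                Real.exp (-2 * d * (2 * π * (j : ℝ) / (N * T)) ^ 2 * t) -
          ∫ ξ in (-(π / T))..(π / T), ξ ^ 2 * Real.exp (-2 * d * ξ ^ 2 * t)|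
        ≤ C / (N * (1 + t)) := by
  set p := π / T with hp_def
  set A := 3 * p
  refine ⟨2 * π / T * (6 * A ^ 2 + 3 / d), by positivity, fun N hN t ht => ?_⟩
  have hN₀ : (1 : ℝ) ≤ N := by exact_mod_cast hN
  set Δ := 2 * π / (N * T) with hΔ
  have hΔ₀ : 0 ≤ Δ := by positivity
  have hNΔ : N * Δ = 2 * p := by
    rw [hΔ, hp_def]
    field_simp
  have hnode : ∀ j : ℤ, 2 * π * (j : ℝ) / (N * T) = j * Δ := fun j => by rw [hΔ]; ring
  simp_rw [hnode, sq_mul_exp_eq_gaussWeight, sum_JN_mul_eq_sum_range]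
  have hgrid := norm_riemannSum_sub_integral_symm_le (hasDerivAt_gaussWeight (2 * d * t))
    (continuous_gaussWeightDeriv _) (A := A) (M := (A ^ 2 + 1 / (2 * d)) / (1 + t))
    hΔ₀ hNΔ (by simpa [hNΔ] using ceil_neg_half_mul_mem N hΔ₀)
    (by nlinarith) fun ξ hξ => by
      rw [Real.norm_eq_abs, abs_of_nonneg (gaussWeight_nonneg _ _)]
      exact gaussWeight_le_div hd ht.le (abs_le.2 hξ)
  simp only [Real.norm_eq_abs, smul_eq_mul] at hgrid
  calc _ ≤ _ := hgrid
    _ ≤ Δ * ((4 * A ^ 2 + 2 / d) / (1 + t) + 2 * ((A ^ 2 + 1 / (2 * d)) / (1 + t))) := by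
        gcongr
        exact integral_abs_gaussWeightDeriv_le_div hd ht.le (by positivity)
    _ = _ := by
        rw [hΔ]
        field_simp
        ring
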